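/- Fix ħ > 0 and ε > 0, and set α(ħ,ε) := ħ²/2 + max(2, 1/(2ε²)) and C(ħ,ε) := 1/(1 + α(ħ,ε)). Then for every smooth compactly supported φ : ℝ² → ℂ one has ‖𝒦φ‖₂² + ‖φ‖₂² ≥ C(ħ,ε) ( ‖Kφ‖₂² + ‖φ‖₂² ). -/

import Mathlib

open MeasureTheory Real Filter
open scoped BigOperators ENNReal NNReal
noncomputable section

/-- The plane `ℝ²`. -/
abbrev E2 := EuclideanSpace ℝ (Fin 2)

-- differentiation in coordinate direction
def dd (k : Fin 2) (f : E2 → ℂ) (x : E2) : ℂ := fderiv ℝ f x (EuclideanSpace.single k 1)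
def ddR (k : Fin 2) (f : E2 → ℝ) (x : E2) : ℝ := fderiv ℝ f x (EuclideanSpace.single k 1)

-- smoothness of x ↦ fderiv f x v
lemma contDiff_dd {f : E2 → ℂ} (hf : ContDiff ℝ (⊤ : ℕ∞) f) (k : Fin 2) :
    ContDiff ℝ (⊤ : ℕ∞) (dd k f) := by
  have h1 : ContDiff ℝ (⊤ : ℕ∞) (fderiv ℝ f) := hf.fderiv_right (by simp)
  exact (ContinuousLinearMap.apply ℝ ℂ (EuclideanSpace.single k 1)).contDiff.comp h1

lemma hcs_dd {f : E2 → ℂ} (hs : HasCompactSupport f) (k : Fin 2) :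
    HasCompactSupport (dd k f) :=
  (hs.fderiv ℝ).comp_left (g := fun L : E2 →L[ℝ] ℂ => L (EuclideanSpace.single k 1)) rfl

lemma integrable_cc {f : E2 → ℂ} (hf : Continuous f) (hs : HasCompactSupport f) :
    Integrable f := hf.integrable_of_hasCompactSupport hs

-- real IBP
lemma ibp_real {f g : E2 → ℝ} (hf : ContDiff ℝ (⊤ : ℕ∞) f) (hsf : HasCompactSupport f)
    (hg : ContDiff ℝ (⊤ : ℕ∞) g) (hsg : HasCompactSupport g) (v : E2) :
    ∫ x, fderiv ℝ f x v * g x = - ∫ x, fderiv ℝ g x v * f x := by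
  obtain ⟨C, hC⟩ := hf.lipschitzWith_of_hasCompactSupport hsf (by simp)
  obtain ⟨D, hD⟩ := hg.lipschitzWith_of_hasCompactSupport hsg (by simp)
  have h := LipschitzWith.integral_lineDeriv_mul_eq (μ := (volume : Measure E2)) hC hD hsg v
  have h1 : ∀ x, lineDeriv ℝ f x v = fderiv ℝ f x v := fun x =>
    (hf.differentiable (by simp) x).lineDeriv_eq_fderiv
  have h2 : ∀ x, lineDeriv ℝ g x (-v) = - fderiv ℝ g x v := fun x => by
    rw [(hg.differentiable (by simp) x).lineDeriv_eq_fderiv, map_neg]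
  simp only [h1, h2, neg_mul] at h
  rw [h, integral_neg]

lemma fderiv_re_apply {u : E2 → ℂ} (hu : Differentiable ℝ u) (x v : E2) :
    fderiv ℝ (fun x => (u x).re) x v = (fderiv ℝ u x v).re := by
  have : fderiv ℝ (fun x => Complex.reCLM (u x)) x
      = Complex.reCLM.comp (fderiv ℝ u x) :=
    (Complex.reCLM.hasFDerivAt.comp x (hu x).hasFDerivAt).fderiv
  have := congrFun (congrArg (fun L : E2 →L[ℝ] ℝ => (L : E2 → ℝ)) this) v
  simpa using this

lemma fderiv_im_apply {u : E2 → ℂ} (hu : Differentiable ℝ u) (x v : E2) :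
    fderiv ℝ (fun x => (u x).im) x v = (fderiv ℝ u x v).im := by
  have : fderiv ℝ (fun x => Complex.imCLM (u x)) x
      = Complex.imCLM.comp (fderiv ℝ u x) :=
    (Complex.imCLM.hasFDerivAt.comp x (hu x).hasFDerivAt).fderiv
  have := congrFun (congrArg (fun L : E2 →L[ℝ] ℝ => (L : E2 → ℝ)) this) v
  simpa using this

lemma contDiff_re {u : E2 → ℂ} (hu : ContDiff ℝ (⊤ : ℕ∞) u) : ContDiff ℝ (⊤ : ℕ∞) (fun x => (u x).re) :=
  Complex.reCLM.contDiff.comp hu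
lemma contDiff_im {u : E2 → ℂ} (hu : ContDiff ℝ (⊤ : ℕ∞) u) : ContDiff ℝ (⊤ : ℕ∞) (fun x => (u x).im) :=
  Complex.imCLM.contDiff.comp hu
lemma hcs_re {u : E2 → ℂ} (hs : HasCompactSupport u) : HasCompactSupport (fun x => (u x).re) :=
  hs.comp_left (g := Complex.re) rfl
lemma hcs_im {u : E2 → ℂ} (hs : HasCompactSupport u) : HasCompactSupport (fun x => (u x).im) :=
  hs.comp_left (g := Complex.im) rfl

lemma contDiff_fdapply {u : E2 → ℂ} (hu : ContDiff ℝ (⊤ : ℕ∞) u) (v : E2) :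
    ContDiff ℝ (⊤ : ℕ∞) (fun x => fderiv ℝ u x v) :=
  (ContinuousLinearMap.apply ℝ ℂ v).contDiff.comp (hu.fderiv_right (by simp))

lemma hcs_fdapply {u : E2 → ℂ} (hs : HasCompactSupport u) (v : E2) :
    HasCompactSupport (fun x => fderiv ℝ u x v) :=
  (hs.fderiv ℝ).comp_left (g := fun L : E2 →L[ℝ] ℂ => L v) rfl

lemma contDiff_fdapplyR {u : E2 → ℝ} (hu : ContDiff ℝ (⊤ : ℕ∞) u) (v : E2) :
    ContDiff ℝ (⊤ : ℕ∞) (fun x => fderiv ℝ u x v) :=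
  (ContinuousLinearMap.apply ℝ ℝ v).contDiff.comp (hu.fderiv_right (by simp))

lemma hcs_fdapplyR {u : E2 → ℝ} (hs : HasCompactSupport u) (v : E2) :
    HasCompactSupport (fun x => fderiv ℝ u x v) :=
  (hs.fderiv ℝ).comp_left (g := fun L : E2 →L[ℝ] ℝ => L v) rfl

lemma integrable_ccR {f : E2 → ℝ} (hf : Continuous f) (hs : HasCompactSupport f) :
    Integrable f := hf.integrable_of_hasCompactSupport hs

lemma ibpC {u w : E2 → ℂ} (hu : ContDiff ℝ (⊤ : ℕ∞) u) (hsu : HasCompactSupport u)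
    (hw : ContDiff ℝ (⊤ : ℕ∞) w) (hsw : HasCompactSupport w) (v : E2) :
    ∫ x, fderiv ℝ u x v * w x = - ∫ x, u x * fderiv ℝ w x v := by
  set u1 := fun x => (u x).re with hu1
  set u2 := fun x => (u x).im with hu2
  set w1 := fun x => (w x).re with hw1
  set w2 := fun x => (w x).im with hw2
  -- integrability of all relevant real products
  have hIcc : ∀ (f g : E2 → ℝ), ContDiff ℝ (⊤ : ℕ∞) f → HasCompactSupport f → ContDiff ℝ (⊤ : ℕ∞) g →
      Integrable (fun x => f x * g x) := fun f g hf hsf hg =>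
    integrable_ccR (hf.continuous.mul hg.continuous) (hsf.mul_right)
  have hL : Integrable (fun x => fderiv ℝ u x v * w x) :=
    integrable_cc ((contDiff_fdapply hu v).continuous.mul hw.continuous)
      ((hcs_fdapply hsu v).mul_right)
  have hR : Integrable (fun x => u x * fderiv ℝ w x v) :=
    integrable_cc (hu.continuous.mul (contDiff_fdapply hw v).continuous)
      (hsu.mul_right)
  have key : ∀ (a b : E2 → ℝ), ContDiff ℝ (⊤ : ℕ∞) a → HasCompactSupport a → ContDiff ℝ (⊤ : ℕ∞) b →
      HasCompactSupport b →
      ∫ x, fderiv ℝ a x v * b x = - ∫ x, fderiv ℝ b x v * a x := fun a b ha hsa hb hsb =>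
    ibp_real ha hsa hb hsb v
  have hru : ∀ x, fderiv ℝ u1 x v = (fderiv ℝ u x v).re := fun x =>
    fderiv_re_apply (hu.differentiable (by simp)) x v
  have hiu : ∀ x, fderiv ℝ u2 x v = (fderiv ℝ u x v).im := fun x =>
    fderiv_im_apply (hu.differentiable (by simp)) x v
  have hrw : ∀ x, fderiv ℝ w1 x v = (fderiv ℝ w x v).re := fun x =>
    fderiv_re_apply (hw.differentiable (by simp)) x v
  have hiw : ∀ x, fderiv ℝ w2 x v = (fderiv ℝ w x v).im := fun x =>
    fderiv_im_apply (hw.differentiable (by simp)) x v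
  have hcu1 := contDiff_re hu; have hcu2 := contDiff_im hu
  have hcw1 := contDiff_re hw; have hcw2 := contDiff_im hw
  have hsu1 := hcs_re hsu; have hsu2 := hcs_im hsu
  have hsw1 := hcs_re hsw; have hsw2 := hcs_im hsw
  apply Complex.ext
  · have hLre := integral_re hL; have hRre := integral_re hR
    simp only [RCLike.re_to_complex] at hLre hRre
    rw [← hLre, Complex.neg_re, ← hRre]
    have e1 : ∀ x, (fderiv ℝ u x v * w x).re = fderiv ℝ u1 x v * w1 x - fderiv ℝ u2 x v * w2 x :=
      fun x => by rw [Complex.mul_re, hru, hiu]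
    have e2 : ∀ x, (u x * fderiv ℝ w x v).re = fderiv ℝ w1 x v * u1 x - fderiv ℝ w2 x v * u2 x :=
      fun x => by rw [Complex.mul_re, hrw, hiw]; ring
    simp only [e1, e2]
    rw [integral_sub (hIcc _ _ (contDiff_fdapplyR hcu1 v) (hcs_fdapplyR hsu1 v) hcw1)
        (hIcc _ _ (contDiff_fdapplyR hcu2 v) (hcs_fdapplyR hsu2 v) hcw2),
      integral_sub (hIcc _ _ (contDiff_fdapplyR hcw1 v) (hcs_fdapplyR hsw1 v) hcu1)
        (hIcc _ _ (contDiff_fdapplyR hcw2 v) (hcs_fdapplyR hsw2 v) hcu2),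
      key u1 w1 hcu1 hsu1 hcw1 hsw1, key u2 w2 hcu2 hsu2 hcw2 hsw2]
    ring
  · have hLim := integral_im hL; have hRim := integral_im hR
    simp only [RCLike.im_to_complex] at hLim hRim
    rw [← hLim, Complex.neg_im, ← hRim]
    have e1 : ∀ x, (fderiv ℝ u x v * w x).im = fderiv ℝ u1 x v * w2 x + fderiv ℝ u2 x v * w1 x :=
      fun x => by rw [Complex.mul_im, hru, hiu]
    have e2 : ∀ x, (u x * fderiv ℝ w x v).im = fderiv ℝ w2 x v * u1 x + fderiv ℝ w1 x v * u2 x :=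
      fun x => by rw [Complex.mul_im, hrw, hiw]; ring
    simp only [e1, e2]
    rw [integral_add (hIcc _ _ (contDiff_fdapplyR hcu1 v) (hcs_fdapplyR hsu1 v) hcw2)
        (hIcc _ _ (contDiff_fdapplyR hcu2 v) (hcs_fdapplyR hsu2 v) hcw1),
      integral_add (hIcc _ _ (contDiff_fdapplyR hcw2 v) (hcs_fdapplyR hsw2 v) hcu1)
        (hIcc _ _ (contDiff_fdapplyR hcw1 v) (hcs_fdapplyR hsw1 v) hcu2),
      key u1 w2 hcu1 hsu1 hcw2 hsw2, key u2 w1 hcu2 hsu2 hcw1 hsw1]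
    ring

/-- The `k`-th component of the vector potential `A(x) = (1/(2ε)) x^⊥`,
where `x^⊥ = (-x₂, x₁)`. -/
def Aco (ε : ℝ) (k : Fin 2) (x : E2) : ℝ :=
  if k = 0 then -(x 1) / (2 * ε) else (x 0) / (2 * ε)

/-- The magnetic momentum operator `-iℏ∂ₖ + Aᵏ(x)`. -/
def Pk (ℏ ε : ℝ) (k : Fin 2) (φ : E2 → ℂ) (x : E2) : ℂ :=
  -Complex.I * (ℏ : ℂ) * fderiv ℝ φ x (EuclideanSpace.single k 1)
    + (Aco ε k x : ℂ) * φ x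

/-- The magnetic kinetic operator `K = (1/2) ∑ₖ (-iℏ∂ₖ + Aᵏ(x))²`. -/
def Kop (ℏ ε : ℝ) (φ : E2 → ℂ) (x : E2) : ℂ :=
  (1 / 2 : ℂ) * ∑ k : Fin 2, Pk ℏ ε k (Pk ℏ ε k φ) x

/-- The confined Hamiltonian `𝒦 = K + (1/2)|x|²`. -/
def KKop (ℏ ε : ℝ) (φ : E2 → ℂ) (x : E2) : ℂ :=
  Kop ℏ ε φ x + (1 / 2 : ℂ) * ((‖x‖ ^ 2 : ℝ) : ℂ) * φ x

/-- Squared `L²(ℝ²)` norm. -/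
def L2sq (f : E2 → ℂ) : ℝ := ∫ x, ‖f x‖ ^ 2

lemma contDiff_coord (k : Fin 2) : ContDiff ℝ (⊤ : ℕ∞) (fun x : E2 => x k) :=
  (EuclideanSpace.proj (𝕜 := ℝ) k).contDiff

lemma contDiff_Aco (ε : ℝ) (k : Fin 2) : ContDiff ℝ (⊤ : ℕ∞) (fun x : E2 => Aco ε k x) := by
  unfold Aco
  rcases eq_or_ne k 0 with h | h
  · simp only [if_pos h]
    exact ((contDiff_coord 1).neg).div_const _
  · simp only [if_neg h]
    exact (contDiff_coord 0).div_const _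

lemma contDiff_Pk {ℏ ε : ℝ} {φ : E2 → ℂ} (hφ : ContDiff ℝ (⊤ : ℕ∞) φ) (k : Fin 2) :
    ContDiff ℝ (⊤ : ℕ∞) (Pk ℏ ε k φ) := by
  unfold Pk
  exact (contDiff_const.mul (contDiff_dd hφ k)).add
    ((Complex.ofRealCLM.contDiff.comp (contDiff_Aco ε k)).mul hφ)

lemma hcs_Pk {ℏ ε : ℝ} {φ : E2 → ℂ} (hs : HasCompactSupport φ) (k : Fin 2) :
    HasCompactSupport (Pk ℏ ε k φ) := by
  unfold Pk
  exact ((hcs_dd hs k).mul_left).add hs.mul_left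

lemma contDiff_Kop {ℏ ε : ℝ} {φ : E2 → ℂ} (hφ : ContDiff ℝ (⊤ : ℕ∞) φ) :
    ContDiff ℝ (⊤ : ℕ∞) (Kop ℏ ε φ) := by
  unfold Kop
  exact contDiff_const.mul (ContDiff.sum fun k _ => contDiff_Pk (contDiff_Pk hφ k) k)

lemma hcs_Kop {ℏ ε : ℝ} {φ : E2 → ℂ} (hφ : ContDiff ℝ (⊤ : ℕ∞) φ) (hs : HasCompactSupport φ) :
    HasCompactSupport (Kop ℏ ε φ) := by
  unfold Kop
  apply HasCompactSupport.mul_left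
  simp only [Fin.sum_univ_two]
  exact (hcs_Pk (hcs_Pk hs 0) 0).add (hcs_Pk (hcs_Pk hs 1) 1)

lemma dd_normsq (x : E2) (k : Fin 2) :
    fderiv ℝ (fun x : E2 => ‖x‖ ^ 2) x (EuclideanSpace.single k 1) = 2 * x k := by
  have h := (hasFDerivAt_id x).norm_sq.fderiv
  simp only [id] at h
  rw [h]
  have : (innerSL ℝ x) (EuclideanSpace.single k (1:ℝ)) = x k := by
    simp [EuclideanSpace.inner_single_right]
  simp [this, two_smul]
  ring

lemma contDiff_conj {u : E2 → ℂ} (hu : ContDiff ℝ (⊤ : ℕ∞) u) :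
    ContDiff ℝ (⊤ : ℕ∞) (fun x => (starRingEnd ℂ) (u x)) :=
  Complex.conjCLE.contDiff.comp hu

lemma hcs_conj {u : E2 → ℂ} (hs : HasCompactSupport u) :
    HasCompactSupport (fun x => (starRingEnd ℂ) (u x)) :=
  hs.comp_left (g := (starRingEnd ℂ)) (map_zero _)

lemma fderiv_conj_apply {u : E2 → ℂ} (hu : Differentiable ℝ u) (x v : E2) :
    fderiv ℝ (fun x => (starRingEnd ℂ) (u x)) x v = (starRingEnd ℂ) (fderiv ℝ u x v) := by
  have : fderiv ℝ (fun x => Complex.conjCLE.toContinuousLinearMap (u x)) x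
      = Complex.conjCLE.toContinuousLinearMap.comp (fderiv ℝ u x) :=
    (Complex.conjCLE.toContinuousLinearMap.hasFDerivAt.comp x (hu x).hasFDerivAt).fderiv
  have := congrFun (congrArg (fun L : E2 →L[ℝ] ℂ => (L : E2 → ℂ)) this) v
  simpa using this

lemma Pk_symm {ℏ ε : ℝ} (k : Fin 2) {u w : E2 → ℂ}
    (hu : ContDiff ℝ (⊤ : ℕ∞) u) (hsu : HasCompactSupport u)
    (hw : ContDiff ℝ (⊤ : ℕ∞) w) (hsw : HasCompactSupport w) :
    ∫ x, (starRingEnd ℂ) (Pk ℏ ε k u x) * w x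
      = ∫ x, (starRingEnd ℂ) (u x) * Pk ℏ ε k w x := by
  set v := EuclideanSpace.single (𝕜 := ℝ) k 1 with hv
  set uc := fun x => (starRingEnd ℂ) (u x) with huc
  have hcuc : ContDiff ℝ (⊤ : ℕ∞) uc := contDiff_conj hu
  have hsuc : HasCompactSupport uc := hcs_conj hsu
  have hduc : ∀ x, fderiv ℝ uc x v = (starRingEnd ℂ) (fderiv ℝ u x v) := fun x =>
    fderiv_conj_apply (hu.differentiable (by simp)) x v
  -- integrability
  have I1 : Integrable (fun x => fderiv ℝ uc x v * w x) :=
    integrable_cc ((contDiff_fdapply hcuc v).continuous.mul hw.continuous)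
      ((hcs_fdapply hsuc v).mul_right)
  have I2 : Integrable (fun x => ((Aco ε k x : ℝ) : ℂ) * (uc x * w x)) :=
    integrable_cc ((Complex.ofRealCLM.continuous.comp (contDiff_Aco ε k).continuous).mul
      ((hcuc.continuous.mul hw.continuous))) ((hsuc.mul_right).mul_left)
  have I3 : Integrable (fun x => uc x * fderiv ℝ w x v) :=
    integrable_cc (hcuc.continuous.mul (contDiff_fdapply hw v).continuous)
      (hsuc.mul_right)
  have lhs_eq : ∀ x, (starRingEnd ℂ) (Pk ℏ ε k u x) * w x
      = Complex.I * (ℏ : ℂ) * (fderiv ℝ uc x v * w x)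
        + ((Aco ε k x : ℝ) : ℂ) * (uc x * w x) := by
    intro x
    rw [hduc x]
    simp only [Pk, map_add, map_mul, map_neg, Complex.conj_I, Complex.conj_ofReal, hduc x,
      huc, neg_neg, hv]
    ring
  have rhs_eq : ∀ x, (starRingEnd ℂ) (u x) * Pk ℏ ε k w x
      = -(Complex.I * (ℏ : ℂ)) * (uc x * fderiv ℝ w x v)
        + ((Aco ε k x : ℝ) : ℂ) * (uc x * w x) := by
    intro x
    simp only [Pk, huc, hv]
    ring
  simp only [lhs_eq, rhs_eq]
  rw [integral_add (I1.const_mul _) I2, integral_add (I3.const_mul _) I2,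
    integral_const_mul, integral_const_mul, ibpC hcuc hsuc hw hsw v]
  ring

lemma fderiv_ofReal_comp {f : E2 → ℝ} (hf : Differentiable ℝ f) (x v : E2) :
    fderiv ℝ (fun x : E2 => ((f x : ℝ) : ℂ)) x v = ((fderiv ℝ f x v : ℝ) : ℂ) := by
  have : fderiv ℝ (fun x => Complex.ofRealCLM (f x)) x
      = Complex.ofRealCLM.comp (fderiv ℝ f x) :=
    (Complex.ofRealCLM.hasFDerivAt.comp x (hf x).hasFDerivAt).fderiv
  have := congrFun (congrArg (fun L : E2 →L[ℝ] ℂ => (L : E2 → ℂ)) this) v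
  simpa using this

def Wf (φ : E2 → ℂ) : E2 → ℂ := fun x => (1 / 2 : ℂ) * ((‖x‖ ^ 2 : ℝ) : ℂ) * φ x

lemma contDiff_nsq : ContDiff ℝ (⊤ : ℕ∞) (fun x : E2 => ((‖x‖ ^ 2 : ℝ) : ℂ)) :=
  Complex.ofRealCLM.contDiff.comp (contDiff_norm_sq ℝ)

lemma contDiff_Wf {φ : E2 → ℂ} (hφ : ContDiff ℝ (⊤ : ℕ∞) φ) : ContDiff ℝ (⊤ : ℕ∞) (Wf φ) :=
  (contDiff_const.mul contDiff_nsq).mul hφ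

lemma hcs_Wf {φ : E2 → ℂ} (hs : HasCompactSupport φ) : HasCompactSupport (Wf φ) :=
  hs.mul_left

lemma dd_nsq (x : E2) (k : Fin 2) :
    fderiv ℝ (fun x : E2 => ((‖x‖ ^ 2 : ℝ) : ℂ)) x (EuclideanSpace.single k 1)
      = ((2 * x k : ℝ) : ℂ) := by
  rw [fderiv_ofReal_comp ((contDiff_norm_sq ℝ (n := (⊤ : ℕ∞))).differentiable (by simp)) x _, dd_normsq]

lemma Pk_Wf {ℏ ε : ℝ} {φ : E2 → ℂ} (hφ : ContDiff ℝ (⊤ : ℕ∞) φ) (k : Fin 2) (x : E2) :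
    Pk ℏ ε k (Wf φ) x = (1 / 2 : ℂ) * ((‖x‖ ^ 2 : ℝ) : ℂ) * Pk ℏ ε k φ x
      + (-Complex.I * (ℏ : ℂ) * ((x k : ℝ) : ℂ)) * φ x := by
  have hg : DifferentiableAt ℝ (fun x : E2 => (1 / 2 : ℂ) * ((‖x‖ ^ 2 : ℝ) : ℂ)) x :=
    ((contDiff_const.mul contDiff_nsq).differentiable (by simp)) x
  have hφd : DifferentiableAt ℝ φ x := (hφ.differentiable (by simp)) x
  have hprod : fderiv ℝ (fun x : E2 => (1 / 2 : ℂ) * ((‖x‖ ^ 2 : ℝ) : ℂ) * φ x) x =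
      ((1 / 2 : ℂ) * ((‖x‖ ^ 2 : ℝ) : ℂ)) • fderiv ℝ φ x
        + φ x • fderiv ℝ (fun x : E2 => (1 / 2 : ℂ) * ((‖x‖ ^ 2 : ℝ) : ℂ)) x :=
    fderiv_mul hg hφd
  have hgd : fderiv ℝ (fun x : E2 => (1 / 2 : ℂ) * ((‖x‖ ^ 2 : ℝ) : ℂ)) x
        (EuclideanSpace.single k 1) = ((x k : ℝ) : ℂ) := by
    rw [fderiv_const_mul (contDiff_nsq.differentiable (by simp) x), ContinuousLinearMap.smul_apply,
      dd_nsq, smul_eq_mul]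
    push_cast
    ring
  unfold Pk Wf
  rw [hprod]
  simp only [ContinuousLinearMap.add_apply, ContinuousLinearMap.smul_apply, smul_eq_mul, hgd]
  ring

lemma real_bound (H a b u0 u1 p w0 w1 : ℝ) (hu0 : 0 ≤ u0) (hu1 : 0 ≤ u1) (hp : 0 ≤ p)
    (h0 : |w0| ≤ u0 * p) (h1 : |w1| ≤ u1 * p) :
    -(H ^ 2 / 2) * p ^ 2 ≤ (a ^ 2 + b ^ 2) / 2 * (u0 ^ 2 + u1 ^ 2) + H * (a * w0 + b * w1) := by
  have habs : ∀ (c w u : ℝ), 0 ≤ u → |w| ≤ u * p → -(|H| * |c| * (u * p)) ≤ H * c * w := by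
    intro c w u hu hw
    have h' : |H * c * w| ≤ |H| * |c| * (u * p) := by
      rw [abs_mul, abs_mul]
      gcongr
    linarith [(abs_le.mp h').1]
  have e0 := habs a w0 u0 hu0 h0
  have e1 := habs b w1 u1 hu1 h1
  have hA : a ^ 2 = |a| ^ 2 := (sq_abs a).symm
  have hB : b ^ 2 = |b| ^ 2 := (sq_abs b).symm
  have hH : H ^ 2 = |H| ^ 2 := (sq_abs H).symm
  set A := |a|; set B := |b|; set HH := |H|
  have key : 0 ≤ (A ^ 2 + B ^ 2) / 2 * (u0 ^ 2 + u1 ^ 2) - HH * A * (u0 * p)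
      - HH * B * (u1 * p) + HH ^ 2 / 2 * p ^ 2 := by
    rcases eq_or_lt_of_le (by positivity : (0:ℝ) ≤ A ^ 2 + B ^ 2) with hs | hs
    · have hA0 : A = 0 := by nlinarith [sq_nonneg A, sq_nonneg B]
      have hB0 : B = 0 := by nlinarith [sq_nonneg A, sq_nonneg B]
      rw [hA0, hB0]
      nlinarith [sq_nonneg (HH * p)]
    · nlinarith [mul_nonneg hs.le (sq_nonneg (A * u1 - B * u0)),
        mul_nonneg hs.le (sq_nonneg (A * u0 + B * u1 - HH * p)), hs]
  nlinarith [key, e0, e1]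

lemma cnsq (z : ℂ) : ‖z‖ ^ 2 = z.re ^ 2 + z.im ^ 2 := by
  rw [Complex.sq_norm, Complex.normSq_apply]
  ring

lemma im_bound (z w : ℂ) : |z.re * w.im - z.im * w.re| ≤ ‖z‖ * ‖w‖ := by
  have h1 : z.re * w.im - z.im * w.re = ((starRingEnd ℂ) z * w).im := by
    simp [Complex.mul_im]
    ring
  rw [h1]
  calc |((starRingEnd ℂ) z * w).im| ≤ ‖(starRingEnd ℂ) z * w‖ :=
        Complex.abs_im_le_norm _
    _ = ‖z‖ * ‖w‖ := by rw [norm_mul, Complex.norm_conj]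

lemma pointwise_bound (H t0 t1 : ℝ) (z0 z1 w : ℂ) :
    -(H ^ 2 / 2) * ‖w‖ ^ 2 ≤
      ((starRingEnd ℂ) z0 * ((((t0 ^ 2 + t1 ^ 2) / 2 : ℝ) : ℂ) * z0
          + -Complex.I * (H : ℂ) * ((t0 : ℝ) : ℂ) * w)).re
      + ((starRingEnd ℂ) z1 * ((((t0 ^ 2 + t1 ^ 2) / 2 : ℝ) : ℂ) * z1
          + -Complex.I * (H : ℂ) * ((t1 : ℝ) : ℂ) * w)).re := by
  have hterm : ∀ (t : ℝ) (z : ℂ),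
      ((starRingEnd ℂ) z * ((((t0 ^ 2 + t1 ^ 2) / 2 : ℝ) : ℂ) * z
          + -Complex.I * (H : ℂ) * ((t : ℝ) : ℂ) * w)).re
        = (t0 ^ 2 + t1 ^ 2) / 2 * ‖z‖ ^ 2 + H * (t * (z.re * w.im - z.im * w.re)) := by
    intro t z
    rw [cnsq]
    simp [Complex.mul_re, Complex.mul_im, Complex.add_re, ← Complex.ofReal_pow, Complex.ofReal_re, Complex.ofReal_im]
    ring
  rw [hterm t0 z0, hterm t1 z1]
  have h := real_bound H t0 t1 ‖z0‖ ‖z1‖ ‖w‖ (z0.re * w.im - z0.im * w.re)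
    (z1.re * w.im - z1.im * w.re) (norm_nonneg _) (norm_nonneg _) (norm_nonneg _)
    (im_bound z0 w) (im_bound z1 w)
  linarith

lemma nsq_coords (x : E2) : ‖x‖ ^ 2 = (x 0) ^ 2 + (x 1) ^ 2 := by
  rw [EuclideanSpace.norm_eq, Real.sq_sqrt (by positivity)]
  simp [Fin.sum_univ_two, sq_abs]

lemma hcs_normsq {f : E2 → ℂ} (hs : HasCompactSupport f) :
    HasCompactSupport (fun x => ‖f x‖ ^ 2) :=
  hs.comp_left (g := fun z : ℂ => ‖z‖ ^ 2) (by simp)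

lemma integrable_normsq {f : E2 → ℂ} (hf : Continuous f) (hs : HasCompactSupport f) :
    Integrable (fun x => ‖f x‖ ^ 2) :=
  integrable_ccR ((hf.norm).pow 2) (hcs_normsq hs)

lemma cross_bound (ℏ ε : ℝ) {φ : E2 → ℂ} (hφ : ContDiff ℝ (⊤ : ℕ∞) φ) (hs : HasCompactSupport φ) :
    -(ℏ ^ 2 / 2) * L2sq φ ≤ 2 * ∫ x, ((starRingEnd ℂ) (Kop ℏ ε φ x) * Wf φ x).re := by
  have hPk : ∀ k, ContDiff ℝ (⊤ : ℕ∞) (Pk ℏ ε k φ) := fun k => contDiff_Pk hφ k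
  have hsPk : ∀ k, HasCompactSupport (Pk ℏ ε k φ) := fun k => hcs_Pk hs k
  have hPPk : ∀ k, ContDiff ℝ (⊤ : ℕ∞) (Pk ℏ ε k (Pk ℏ ε k φ)) := fun k => contDiff_Pk (hPk k) k
  have hsPPk : ∀ k, HasCompactSupport (Pk ℏ ε k (Pk ℏ ε k φ)) := fun k => hcs_Pk (hsPk k) k
  have hW : ContDiff ℝ (⊤ : ℕ∞) (Wf φ) := contDiff_Wf hφ
  have hsW : HasCompactSupport (Wf φ) := hcs_Wf hs
  -- the integrals Iₖ = ∫ conj (Pk Pk φ) Wf φ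
  have hIk : ∀ k, Integrable (fun x => (starRingEnd ℂ) (Pk ℏ ε k (Pk ℏ ε k φ) x) * Wf φ x) :=
    fun k => integrable_cc ((contDiff_conj (hPPk k)).continuous.mul hW.continuous)
      ((hcs_conj (hsPPk k)).mul_right)
  -- the integrals Jₖ = ∫ conj (Pk φ) * Pk (Wf φ)
  have hJk : ∀ k, Integrable (fun x => (starRingEnd ℂ) (Pk ℏ ε k φ x) * Pk ℏ ε k (Wf φ) x) :=
    fun k => integrable_cc ((contDiff_conj (hPk k)).continuous.mul
      (contDiff_Pk hW k).continuous) ((hcs_conj (hsPk k)).mul_right)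
  have hKW : Integrable (fun x => (starRingEnd ℂ) (Kop ℏ ε φ x) * Wf φ x) :=
    integrable_cc ((contDiff_conj (contDiff_Kop hφ)).continuous.mul hW.continuous)
      ((hcs_conj (hcs_Kop hφ hs)).mul_right)
  -- step 1: split the integral
  have split : ∫ x, (starRingEnd ℂ) (Kop ℏ ε φ x) * Wf φ x
      = (1 / 2 : ℂ) * ((∫ x, (starRingEnd ℂ) (Pk ℏ ε 0 (Pk ℏ ε 0 φ) x) * Wf φ x)
        + ∫ x, (starRingEnd ℂ) (Pk ℏ ε 1 (Pk ℏ ε 1 φ) x) * Wf φ x) := by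
    rw [← integral_add (hIk 0) (hIk 1), ← integral_const_mul]
    congr 1
    ext x
    simp only [Kop, Fin.sum_univ_two, map_mul, map_add]
    have : (starRingEnd ℂ) (1 / 2 : ℂ) = (1 / 2 : ℂ) := by
      simp [map_div₀, map_ofNat]
    rw [this]
    ring
  -- step 2: integrate by parts
  have symm : ∀ k, ∫ x, (starRingEnd ℂ) (Pk ℏ ε k (Pk ℏ ε k φ) x) * Wf φ x
      = ∫ x, (starRingEnd ℂ) (Pk ℏ ε k φ x) * Pk ℏ ε k (Wf φ) x :=
    fun k => Pk_symm k (hPk k) (hsPk k) hW hsW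
  have hKWre := integral_re hKW
  simp only [RCLike.re_to_complex] at hKWre
  rw [hKWre, split, symm 0, symm 1]
  -- step 3: take real parts
  have hre : (2 : ℝ) * ((1 / 2 : ℂ) * ((∫ x, (starRingEnd ℂ) (Pk ℏ ε 0 φ x) * Pk ℏ ε 0 (Wf φ) x)
        + ∫ x, (starRingEnd ℂ) (Pk ℏ ε 1 φ x) * Pk ℏ ε 1 (Wf φ) x)).re
      = (∫ x, ((starRingEnd ℂ) (Pk ℏ ε 0 φ x) * Pk ℏ ε 0 (Wf φ) x).re)
        + ∫ x, ((starRingEnd ℂ) (Pk ℏ ε 1 φ x) * Pk ℏ ε 1 (Wf φ) x).re := by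
    have h0 := integral_re (hJk 0)
    have h1 := integral_re (hJk 1)
    simp only [RCLike.re_to_complex] at h0 h1
    rw [h0, h1, ← Complex.add_re]
    have h2 : ∀ z : ℂ, (2 : ℝ) * ((1 / 2 : ℂ) * z).re = z.re := fun z => by
      simp [Complex.mul_re]
    exact h2 _
  rw [hre]
  -- step 4: pointwise bound and integrate
  have hre_int : ∀ k, Integrable (fun x => ((starRingEnd ℂ) (Pk ℏ ε k φ x) * Pk ℏ ε k (Wf φ) x).re) :=
    fun k => (hJk k).re
  rw [← integral_add (hre_int 0) (hre_int 1)]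
  have hlhs : -(ℏ ^ 2 / 2) * L2sq φ = ∫ x, -(ℏ ^ 2 / 2) * ‖φ x‖ ^ 2 := by
    rw [integral_const_mul]
    rfl
  rw [hlhs]
  apply integral_mono (Integrable.const_mul (integrable_normsq hφ.continuous hs) _)
    ((hre_int 0).add (hre_int 1))
  intro x
  have h0 := Pk_Wf (ℏ := ℏ) (ε := ε) hφ 0 x
  have h1 := Pk_Wf (ℏ := ℏ) (ε := ε) hφ 1 x
  have hcast : (1 / 2 : ℂ) * ((‖x‖ ^ 2 : ℝ) : ℂ)
      = ((((x 0) ^ 2 + (x 1) ^ 2) / 2 : ℝ) : ℂ) := by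
    rw [nsq_coords]
    push_cast
    ring
  have hb := pointwise_bound ℏ (x 0) (x 1) (Pk ℏ ε 0 φ x) (Pk ℏ ε 1 φ x) (φ x)
  simp only [Pi.add_apply]
  rw [h0, h1, hcast]
  exact hb

lemma final_arith (hh α A B C KK R2 : ℝ) (hαge : hh ≤ α) (hd : KK = A + B + R2)
    (hR : -hh * C ≤ R2) (hb : 0 ≤ B) (hc : 0 ≤ C) (hKK : 0 ≤ KK) (hα0 : 0 ≤ α) :
    1 * (A + C) ≤ (KK + C) * (1 + α) := by
  nlinarith [mul_nonneg hα0 hKK, mul_nonneg (sub_nonneg.mpr hαge) hc]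

lemma L2sq_nonneg (f : E2 → ℂ) : 0 ≤ L2sq f :=
  integral_nonneg fun x => by positivity

lemma norm_add_sq_c (z w : ℂ) :
    ‖z + w‖ ^ 2 = ‖z‖ ^ 2 + ‖w‖ ^ 2 + 2 * ((starRingEnd ℂ) z * w).re := by
  rw [cnsq, cnsq, cnsq]
  simp [Complex.add_re, Complex.add_im, Complex.mul_re]
  ring

lemma L2_expand (ℏ ε : ℝ) {φ : E2 → ℂ} (hφ : ContDiff ℝ (⊤ : ℕ∞) φ) (hs : HasCompactSupport φ) :
    L2sq (KKop ℏ ε φ) = L2sq (Kop ℏ ε φ) + L2sq (Wf φ)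
      + 2 * ∫ x, ((starRingEnd ℂ) (Kop ℏ ε φ x) * Wf φ x).re := by
  have hK : ContDiff ℝ (⊤ : ℕ∞) (Kop ℏ ε φ) := contDiff_Kop hφ
  have hsK : HasCompactSupport (Kop ℏ ε φ) := hcs_Kop hφ hs
  have hW : ContDiff ℝ (⊤ : ℕ∞) (Wf φ) := contDiff_Wf hφ
  have hsW : HasCompactSupport (Wf φ) := hcs_Wf hs
  have hpt : ∀ x, ‖KKop ℏ ε φ x‖ ^ 2 = ‖Kop ℏ ε φ x‖ ^ 2 + ‖Wf φ x‖ ^ 2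
      + 2 * ((starRingEnd ℂ) (Kop ℏ ε φ x) * Wf φ x).re := fun x =>
    norm_add_sq_c (Kop ℏ ε φ x) (Wf φ x)
  have I1 := integrable_normsq hK.continuous hsK
  have I2 := integrable_normsq hW.continuous hsW
  have I3 : Integrable (fun x => 2 * ((starRingEnd ℂ) (Kop ℏ ε φ x) * Wf φ x).re) :=
    (Integrable.re (integrable_cc ((contDiff_conj hK).continuous.mul hW.continuous)
      ((hcs_conj hsK).mul_right))).const_mul 2
  unfold L2sq
  simp only [hpt]
  have I12 : Integrable (fun x => ‖Kop ℏ ε φ x‖ ^ 2 + ‖Wf φ x‖ ^ 2) volume := I1.add I2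
  rw [integral_add I12 I3, integral_add I1 I2, integral_const_mul]

/-- Lemma 6.7 for `N = 1`: `𝒦`-norm controls the `K`-norm. -/
theorem K_norm_control (ℏ ε : ℝ) (hℏ : 0 < ℏ) (hε : 0 < ε)
    (φ : E2 → ℂ) (hφ : ContDiff ℝ (⊤ : ℕ∞) φ) (hsupp : HasCompactSupport φ) :
    (1 / (1 + (ℏ ^ 2 / 2 + max 2 (1 / (2 * ε ^ 2))))) * (L2sq (Kop ℏ ε φ) + L2sq φ)
      ≤ L2sq (KKop ℏ ε φ) + L2sq φ := by
  set α := ℏ ^ 2 / 2 + max 2 (1 / (2 * ε ^ 2)) with hα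
  have hαge : ℏ ^ 2 / 2 ≤ α := by
    have : (0:ℝ) ≤ max 2 (1 / (2 * ε ^ 2)) := le_trans (by norm_num) (le_max_left _ _)
    linarith
  have hα0 : 0 ≤ α := le_trans (by positivity) hαge
  have h1 : 0 < 1 + α := by linarith
  have hd := L2_expand ℏ ε hφ hsupp
  have hR := cross_bound ℏ ε hφ hsupp
  have ha := L2sq_nonneg (Kop ℏ ε φ)
  have hb := L2sq_nonneg (Wf φ)
  have hc := L2sq_nonneg φ
  have hKK := L2sq_nonneg (KKop ℏ ε φ)
  rw [div_mul_eq_mul_div, div_le_iff₀ h1]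
  exact final_arith (ℏ ^ 2 / 2) α (L2sq (Kop ℏ ε φ)) (L2sq (Wf φ)) (L2sq φ)
    (L2sq (KKop ℏ ε φ)) (2 * ∫ x, ((starRingEnd ℂ) (Kop ℏ ε φ x) * Wf φ x).re)
    hαge hd (by linarith [hR]) hb hc hKK hα0
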